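/- For every real θ, the element r(θ) = E₂₃ ∧ E₁₂ + (1/2)E₁₃ ∧ H₁₃ + (θ/2)E₁₃ ∧ (H₁₂ − H₂₃), where x ∧ y := x ⊗ y − y ⊗ x, satisfies the classical Yang–Baxter equation [r₁₂, r₁₃] + [r₁₂, r₂₃] + [r₁₃, r₂₃] = 0 in M₃(ℝ)^{⊗3}. -/

import Mathlib

noncomputable section

open Matrix Kronecker

abbrev M3 := Matrix (Fin 3) (Fin 3) ℝ

def Eij (i j : Fin 3) : M3 := single i j 1

def H12 : M3 := Eij 0 0 - Eij 1 1
def H23 : M3 := Eij 1 1 - Eij 2 2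
def H13 : M3 := Eij 0 0 - Eij 2 2

def T3 (a b c : M3) : Matrix ((Fin 3 × Fin 3) × Fin 3) ((Fin 3 × Fin 3) × Fin 3) ℝ :=
  (a ⊗ₖ b) ⊗ₖ c

def w12 (x y : M3) := T3 x y 1 - T3 y x 1
def w13 (x y : M3) := T3 x 1 y - T3 y 1 x
def w23 (x y : M3) := T3 1 x y - T3 1 y x

def r12 (θ : ℝ) := w12 (Eij 1 2) (Eij 0 1) + (1/2 : ℝ) • w12 (Eij 0 2) H13
  + (θ/2) • w12 (Eij 0 2) (H12 - H23)

def r13 (θ : ℝ) := w13 (Eij 1 2) (Eij 0 1) + (1/2 : ℝ) • w13 (Eij 0 2) H13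
  + (θ/2) • w13 (Eij 0 2) (H12 - H23)

def r23 (θ : ℝ) := w23 (Eij 1 2) (Eij 0 1) + (1/2 : ℝ) • w23 (Eij 0 2) H13
  + (θ/2) • w23 (Eij 0 2) (H12 - H23)

lemma Eij_mul (i j k l : Fin 3) : Eij i j * Eij k l = if j = k then Eij i l else 0 := by
  unfold Eij
  split
  · subst ‹j = k›; rw [single_mul_single_same, one_mul]
  · exact single_mul_single_of_ne (c := (1:ℝ)) (i := i) (j := j) (k := k) (h := ‹j ≠ k›) (d := 1)

lemma T3_apply (a b c : M3) (i j) :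
    T3 a b c i j = a i.1.1 j.1.1 * b i.1.2 j.1.2 * c i.2 j.2 := by
  simp [T3, Matrix.kroneckerMap_apply, mul_assoc]

lemma T3_sub₁ (a a' b c : M3) : T3 (a - a') b c = T3 a b c - T3 a' b c := by
  ext i j; simp [T3_apply, Matrix.sub_apply]; ring
lemma T3_sub₂ (a b b' c : M3) : T3 a (b - b') c = T3 a b c - T3 a b' c := by
  ext i j; simp [T3_apply, Matrix.sub_apply]; ring
lemma T3_sub₃ (a b c c' : M3) : T3 a b (c - c') = T3 a b c - T3 a b c' := by
  ext i j; simp [T3_apply, Matrix.sub_apply]; ring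
lemma T3_zero₁ (b c : M3) : T3 0 b c = 0 := by ext i j; simp [T3_apply]
lemma T3_zero₂ (a c : M3) : T3 a 0 c = 0 := by ext i j; simp [T3_apply]
lemma T3_zero₃ (a b : M3) : T3 a b 0 = 0 := by ext i j; simp [T3_apply]

lemma T3_mul (a b c a' b' c' : M3) : T3 a b c * T3 a' b' c' = T3 (a*a') (b*b') (c*c') := by
  simp [T3, ← Matrix.mul_kronecker_mul]

/-- for every real θ, r(θ) satisfies the classical Yang–Baxter equation. -/
theorem stmt7 (θ : ℝ) : ⁅r12 θ, r13 θ⁆ + ⁅r12 θ, r23 θ⁆ + ⁅r13 θ, r23 θ⁆ = 0 := by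
  simp only [Ring.lie_def, r12, r13, r23, w12, w13, w23, H12, H23, H13]
  simp only [sub_mul, mul_sub, add_mul, mul_add, smul_mul_assoc, mul_smul_comm, T3_mul,
    Eij_mul, mul_one, one_mul, mul_zero, zero_mul, Fin.isValue, if_true, if_false,
    Fin.reduceEq, reduceIte, T3_sub₁, T3_sub₂, T3_sub₃, T3_zero₁, T3_zero₂, T3_zero₃,
    smul_zero, sub_zero, zero_sub, sub_self, neg_zero, add_zero, zero_add]
  module
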